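/- arXiv:math/0406261 — 3 statements merged into one kernel-verified Lean document; each statement's English description precedes it below -/
import Mathlib

section
/- Let ω₂ : ℕ → ℝ be positive with ω₂(n)/n increasing to infinity and ∑ 1/ω₂(n) = ∞. Define Φ(n) = exp(−∑_{k=1}^{n} 1/ω₂(k)). Then ∑_{k=1}^{n} Φ(k) = O(n·Φ(n)) as n → ∞. -/
/-!
Once ω₂(j) ≥ 2j, the sum of 1/ω₂(j) over k < j ≤ n is at most a constant plus
½ log(n/k), so Φ(k) ≤ C √(n/k) Φ(n); summing, ∑_{k ≤ n} √(n/k) ≤ 2n.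
-/

open Finset Filter Real

lemma sum_Ioc_one_div_le_log_sub {k n : ℕ} (hk : 1 ≤ k) (hkn : k ≤ n) :
    ∑ j ∈ Ioc k n, (1 : ℝ) / j ≤ log n - log k := by
  induction n, hkn using Nat.le_induction with
  | base => simp
  | succ n hkn ih =>
    have hn : (0 : ℝ) < n := by exact_mod_cast hk.trans hkn
    have hstep : 1 / ((n : ℝ) + 1) ≤ log (n + 1) - log n := by
      have := one_sub_inv_le_log_of_pos (x := (n + 1) / n) (by positivity)
      rwa [log_div (by positivity) hn.ne', inv_div, one_sub_div (by positivity),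
        add_sub_cancel_left] at this
    rw [sum_Ioc_succ_top hkn, Nat.cast_succ]
    linarith

lemma sum_Icc_one_div_sqrt_le (n : ℕ) : ∑ k ∈ Icc 1 n, 1 / √k ≤ 2 * √n := by
  induction n with
  | zero => simp
  | succ n ih =>
    have hstep : 1 / √(n + 1) ≤ 2 * (√(n + 1) - √n) := by
      have hn1 : 0 < √(n + 1) := by positivity
      rw [div_le_iff₀ hn1]
      nlinarith [sq_nonneg (√(n + 1) - √n), sq_sqrt (n.cast_nonneg : (0 : ℝ) ≤ n),
        sq_sqrt (by positivity : (0 : ℝ) ≤ n + 1)]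
    rw [sum_Icc_succ_top (by omega), Nat.cast_succ]
    linarith

lemma sum_Icc_one_sub_sum_Icc_one {M : Type*} [AddCommGroup M] (f : ℕ → M) {k n : ℕ}
    (hkn : k ≤ n) : ∑ j ∈ Icc 1 n, f j - ∑ j ∈ Icc 1 k, f j = ∑ j ∈ Ioc k n, f j := by
  have hIcc (m : ℕ) : Icc 1 m = Ioc 0 m := Icc_add_one_left_eq_Ioc 0 m
  rw [hIcc, hIcc, ← sum_Ioc_consecutive f k.zero_le hkn, add_sub_cancel_left]

lemma sum_Ioc_le_add_mul_log_sub {f : ℕ → ℝ} {c : ℝ} {N k n : ℕ} (hc : 0 ≤ c)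
    (hf : ∀ j, 1 ≤ j → 0 ≤ f j) (hfN : ∀ j, N ≤ j → f j ≤ c / j) (hk : 1 ≤ k) (hkn : k ≤ n) :
    ∑ j ∈ Ioc k n, f j ≤ ∑ j ∈ Icc 1 N, f j + c * (log n - log k) := by
  rw [← sum_filter_add_sum_filter_not (Ioc k n) (· ≤ N)]
  gcongr ?_ + ?_
  · refine sum_le_sum_of_subset_of_nonneg (fun j hj => ?_) fun j hj _ => hf j (mem_Icc.mp hj).1
    simp only [mem_filter, mem_Ioc, mem_Icc] at hj ⊢
    omega
  · calc ∑ j ∈ (Ioc k n).filter (¬ · ≤ N), f j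
        ≤ ∑ j ∈ (Ioc k n).filter (¬ · ≤ N), c / j :=
          sum_le_sum fun j hj => hfN j (by simp only [mem_filter] at hj; omega)
      _ ≤ ∑ j ∈ Ioc k n, c / j :=
          sum_le_sum_of_subset_of_nonneg (filter_subset _ _) fun _ _ _ => by positivity
      _ = c * ∑ j ∈ Ioc k n, (1 : ℝ) / j := by simp only [mul_sum, mul_one_div]
      _ ≤ c * (log n - log k) := by gcongr; exact sum_Ioc_one_div_le_log_sub hk hkn

lemma exp_neg_sum_Icc_le {f : ℕ → ℝ} {N k n : ℕ} (hf : ∀ j, 1 ≤ j → 0 ≤ f j)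
    (hfN : ∀ j, N ≤ j → f j ≤ 1 / (2 * j)) (hk : 1 ≤ k) (hkn : k ≤ n) :
    exp (-∑ j ∈ Icc 1 k, f j) ≤
      exp (∑ j ∈ Icc 1 N, f j) * √n * (1 / √k) * exp (-∑ j ∈ Icc 1 n, f j) := by
  have htail := sum_Ioc_le_add_mul_log_sub (c := 1 / 2) (by norm_num) hf
    (fun j hj => (hfN j hj).trans_eq (div_div _ _ _).symm) hk hkn
  have hk0 : (0 : ℝ) < k := by exact_mod_cast hk
  have hn0 : (0 : ℝ) < n := by exact_mod_cast hk.trans hkn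
  calc exp (-∑ j ∈ Icc 1 k, f j)
      = exp (∑ j ∈ Ioc k n, f j) * exp (-∑ j ∈ Icc 1 n, f j) := by
        rw [← sum_Icc_one_sub_sum_Icc_one f hkn, ← exp_add]; ring_nf
    _ ≤ exp (∑ j ∈ Icc 1 N, f j + 1 / 2 * (log n - log k)) * exp (-∑ j ∈ Icc 1 n, f j) := by
        gcongr
    _ = exp (∑ j ∈ Icc 1 N, f j) * √n * (1 / √k) * exp (-∑ j ∈ Icc 1 n, f j) := by
        rw [exp_add, one_div_mul_eq_div, exp_half, exp_sub, exp_log hn0, exp_log hk0,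
          sqrt_div' _ hk0.le]
        ring

theorem exists_sum_exp_neg_sum_Icc_le {f : ℕ → ℝ} (hf : ∀ j, 1 ≤ j → 0 ≤ f j)
    (hf_le : ∀ᶠ j in atTop, f j ≤ 1 / (2 * j)) :
    ∃ C, ∀ n, ∑ k ∈ Icc 1 n, exp (-∑ j ∈ Icc 1 k, f j) ≤
      C * (n * exp (-∑ j ∈ Icc 1 n, f j)) := by
  obtain ⟨N, hN⟩ := hf_le.exists_forall_of_atTop
  refine ⟨2 * exp (∑ j ∈ Icc 1 N, f j), fun n => ?_⟩
  set A := exp (∑ j ∈ Icc 1 N, f j)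
  set Φn := exp (-∑ j ∈ Icc 1 n, f j)
  calc ∑ k ∈ Icc 1 n, exp (-∑ j ∈ Icc 1 k, f j)
      ≤ ∑ k ∈ Icc 1 n, A * √n * (1 / √k) * Φn := sum_le_sum fun k hk =>
        exp_neg_sum_Icc_le hf hN (mem_Icc.mp hk).1 (mem_Icc.mp hk).2
    _ = A * √n * (∑ k ∈ Icc 1 n, 1 / √k) * Φn := by rw [mul_sum, sum_mul]
    _ ≤ A * √n * (2 * √n) * Φn := by gcongr; exact sum_Icc_one_div_sqrt_le n
    _ = 2 * A * (n * Φn) := by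
        linear_combination 2 * A * Φn * mul_self_sqrt (n.cast_nonneg : (0 : ℝ) ≤ n)

theorem stmt0_general (ω₂ : ℕ → ℝ)
    (hpos : ∀ n, 1 ≤ n → 0 < ω₂ n)
    (htend : Tendsto (fun n : ℕ => ω₂ n / n) atTop atTop)
    (Φ : ℕ → ℝ)
    (hΦ : ∀ n, Φ n = Real.exp (-(∑ k ∈ Icc 1 n, 1 / ω₂ k))) :
    ∃ C : ℝ, ∀ n, 1 ≤ n → ∑ k ∈ Icc 1 n, Φ k ≤ C * (n * Φ n) := by
  have hsmall : ∀ᶠ j : ℕ in atTop, 1 / ω₂ j ≤ 1 / (2 * j) := by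
    filter_upwards [htend.eventually_ge_atTop 2, eventually_ge_atTop 1] with j hj hj1
    have hj0 : (0 : ℝ) < j := by exact_mod_cast hj1
    exact one_div_le_one_div_of_le (by positivity) ((le_div_iff₀ hj0).mp hj)
  obtain ⟨C, hC⟩ := exists_sum_exp_neg_sum_Icc_le
    (fun j hj => (one_div_pos.mpr (hpos j hj)).le) hsmall
  exact ⟨C, fun n _ => by simpa only [hΦ] using hC n⟩

/-- Lemma 3.1 (Phi normal): if ω₂ is positive, ω₂(n)/n increases to infinity and
∑ 1/ω₂(n) diverges, then with Φ(n) = exp(−∑_{k=1}^n 1/ω₂(k)) we have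
∑_{k=1}^n Φ(k) = O(n Φ(n)). -/
theorem stmt0 (ω₂ : ℕ → ℝ)
    (hpos : ∀ n, 1 ≤ n → 0 < ω₂ n)
    (hmono : ∀ m n, 1 ≤ m → m ≤ n → ω₂ m / m ≤ ω₂ n / n)
    (htend : Tendsto (fun n : ℕ => ω₂ n / n) atTop atTop)
    (hdiv : Tendsto (fun n : ℕ => ∑ k ∈ Icc 1 n, 1 / ω₂ k) atTop atTop)
    (Φ : ℕ → ℝ)
    (hΦ : ∀ n, Φ n = Real.exp (-(∑ k ∈ Icc 1 n, 1 / ω₂ k))) :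
    ∃ C : ℝ, ∀ n, 1 ≤ n → ∑ k ∈ Icc 1 n, Φ k ≤ C * (n * Φ n) :=
  stmt0_general ω₂ hpos htend Φ hΦ
end

section
/- Let (X, μ) be a probability space and L : X → ℝ measurable with A ≤ L ≤ B pointwise. Suppose ∫ L dμ = εB + (1−ε)A for some ε ∈ [0,1]. Then for every D ∈ (A, B), ∫ max(L, D) dμ ≤ εB + (1−ε)D. -/
open MeasureTheory

/-- Lemma 4.2: if A ≤ L ≤ B on a probability space and ∫L = εB + (1−ε)A for some
ε ∈ [0,1], then for every D ∈ (A,B), ∫ max(L,D) ≤ εB + (1−ε)D. -/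
theorem stmt6 {X : Type*} [MeasurableSpace X] (μ : Measure X) [IsProbabilityMeasure μ]
    (L : X → ℝ) (hL : Integrable L μ) (A B : ℝ) (hAB : A < B)
    (hbound : ∀ x, A ≤ L x ∧ L x ≤ B)
    (ε : ℝ) (hε : ε ∈ Set.Icc (0 : ℝ) 1)
    (hint : ∫ x, L x ∂μ = ε * B + (1 - ε) * A)
    (D : ℝ) (hD : D ∈ Set.Ioo A B) :
    ∫ x, max (L x) D ∂μ ≤ ε * B + (1 - ε) * D := by
  obtain ⟨hDA, hDB⟩ := hD
  set c : ℝ := (B - D) / (B - A) with hc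
  have hBA : (0:ℝ) < B - A := by linarith
  have hc0 : 0 ≤ c := div_nonneg (by linarith) hBA.le
  have hg : Integrable (fun x => D + (L x - A) * c) μ := by
    apply (integrable_const D).add
    exact ((hL.sub (integrable_const A)).mul_const c)
  have hmax : Integrable (fun x => max (L x) D) μ := hL.sup (integrable_const D)
  have hg2 : Integrable (fun x => (L x - A) * c) μ :=
    (hL.sub (integrable_const A)).mul_const c
  have hcBA : c * (B - A) = B - D := div_mul_cancel₀ _ hBA.ne'
  have hle : ∀ x, max (L x) D ≤ D + (L x - A) * c := by
    intro x
    obtain ⟨h1, h2⟩ := hbound x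
    rcases le_total (L x) D with h | h
    · rw [max_eq_right h]
      nlinarith [mul_nonneg (by linarith : (0:ℝ) ≤ L x - A) hc0]
    · rw [max_eq_left h]
      nlinarith [mul_nonneg (by linarith : (0:ℝ) ≤ B - L x) (div_nonneg (by linarith : (0:ℝ) ≤ D - A) hBA.le)]
  calc ∫ x, max (L x) D ∂μ ≤ ∫ x, D + (L x - A) * c ∂μ :=
        integral_mono hmax hg hle
    _ = D + ((∫ x, L x ∂μ) - A) * c := by
        rw [integral_add (integrable_const D) hg2, integral_const, integral_mul_const]
        have : ∫ x, L x - A ∂μ = (∫ x, L x ∂μ) - A := by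
          rw [integral_sub hL (integrable_const A), integral_const]; simp
        rw [this]; simp
    _ = ε * B + (1 - ε) * D := by
        rw [hint]
        have : ε * B + (1 - ε) * A - A = ε * (B - A) := by ring
        rw [this]
        linear_combination ε * hcBA
end

section
/- Let h : [0,τ]² → ℂ be C² with |h(t₁,t₂)| ≤ 1, |∂h/∂tᵢ| ≤ 5β, and |∂²h/∂t₁∂t₂| ≤ 25β² on [0,τ]². Let β' = max(β, 1/τ) and m ∈ ℤ \ {0}. Then |(1/τ²)∫₀^τ∫₀^τ h(t₁,t₂)e^{−im(t₁+t₂)} dt₁ dt₂| ≤ 49 β'²/m². -/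
open Set Complex

/-!
Integrate by parts in `t₂`: for each `t₁` the inner integral `g t₁ = ∫ h(t₁, t₂) e^{-imt₂} dt₂` is
`O((1 + βτ)/|m|)`, and likewise its `t₁`-derivative `∫ ∂₁h(t₁, t₂) e^{-imt₂} dt₂` is
`O(β(1 + βτ)/|m|)`. A second integration by parts, now in `t₁` applied to `g`, gains another
factor `1/|m|`, giving `(2 + 5βτ)²/m²` before normalisation by `τ²`; finally
`2/τ + 5β ≤ 7 max(β, 1/τ)`.
-/

open Function MeasureTheory intervalIntegral
open scoped Interval

section ParametricIntegral

variable {E : Type*} [NormedAddCommGroup E] [NormedSpace ℝ E]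
  {F F' : ℝ → ℝ → E} {a b c d : ℝ}

/-- Extending `F` to the plane through `projIcc` reduces this to the continuous case. -/
theorem continuousOn_intervalIntegral_of_continuousOn_prod (hab : a ≤ b) (hcd : c ≤ d)
    (hF : ContinuousOn (uncurry F) (Icc c d ×ˢ Icc a b)) :
    ContinuousOn (fun x => ∫ t in a..b, F x t) (Icc c d) := by
  set G : ℝ → ℝ → E := fun x t => F (projIcc c d hcd x) (projIcc a b hab t)
  have hG : Continuous (uncurry G) :=
    hF.comp_continuous
      (f := fun p : ℝ × ℝ => ((projIcc c d hcd p.1 : ℝ), (projIcc a b hab p.2 : ℝ)))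
      (by fun_prop) fun p => ⟨(projIcc c d hcd p.1).2, (projIcc a b hab p.2).2⟩
  refine (continuous_parametric_intervalIntegral_of_continuous' hG a b).continuousOn.congr
    fun x hx => integral_congr fun t ht => ?_
  rw [uIcc_of_le hab] at ht
  simp only [G, projIcc_of_mem hcd hx, projIcc_of_mem hab ht]

theorem hasDerivAt_intervalIntegral_of_continuousOn_prod (hab : a ≤ b)
    (hF : ContinuousOn (uncurry F) (Icc c d ×ˢ Icc a b))
    (hF' : ContinuousOn (uncurry F') (Icc c d ×ˢ Icc a b))
    (hderiv : ∀ x ∈ Icc c d, ∀ t ∈ Icc a b, HasDerivAt (F · t) (F' x t) x)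
    {x₀ : ℝ} (hx₀ : x₀ ∈ Ioo c d) :
    HasDerivAt (fun x => ∫ t in a..b, F x t) (∫ t in a..b, F' x₀ t) x₀ := by
  obtain ⟨C, hC⟩ := (isCompact_Icc.prod isCompact_Icc).exists_bound_of_continuousOn hF'
  have hIoc : Ι a b ⊆ Icc a b := by rw [uIoc_of_le hab]; exact Ioc_subset_Icc_self
  have hmeas {G : ℝ → ℝ → E} (hG : ContinuousOn (uncurry G) (Icc c d ×ˢ Icc a b))
      {x : ℝ} (hx : x ∈ Icc c d) : AEStronglyMeasurable (G x) (volume.restrict (Ι a b)) :=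
    ((hG.uncurry_left x hx).mono hIoc).aestronglyMeasurable measurableSet_uIoc
  have hx₀' : x₀ ∈ Icc c d := Ioo_subset_Icc_self hx₀
  refine (hasDerivAt_integral_of_dominated_loc_of_deriv_le (bound := fun _ => C)
    (Icc_mem_nhds hx₀.1 hx₀.2) ?_ ?_ (hmeas hF' hx₀') ?_ intervalIntegrable_const ?_).2
  · filter_upwards [Icc_mem_nhds hx₀.1 hx₀.2] with x hx using hmeas hF hx
  · exact (hF.uncurry_left x₀ hx₀').intervalIntegrable_of_Icc hab
  · exact ae_of_all _ fun t ht x hx => hC (x, t) ⟨hx, hIoc ht⟩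
  · exact ae_of_all _ fun t ht x hx => hderiv x hx t (hIoc ht)

end ParametricIntegral

theorem norm_exp_neg_I_mul_ofReal_mul (ω t : ℝ) : ‖exp (-I * ω * t)‖ = 1 := by
  rw [norm_exp]; simp

theorem norm_integral_mul_exp_le {f f' : ℝ → ℂ} {a b ω A B : ℝ} (hab : a ≤ b) (hω : ω ≠ 0)
    (hf : ContinuousOn f (Icc a b)) (hf' : ContinuousOn f' (Icc a b))
    (hderiv : ∀ t ∈ Ioo a b, HasDerivAt f (f' t) t)
    (hA : ∀ t ∈ Icc a b, ‖f t‖ ≤ A) (hB : ∀ t ∈ Icc a b, ‖f' t‖ ≤ B) :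
    ‖∫ t in a..b, f t * exp (-I * ω * t)‖ ≤ (2 * A + B * (b - a)) / |ω| := by
  have hω' : (ω : ℂ) ≠ 0 := ofReal_ne_zero.2 hω
  set v : ℝ → ℂ := fun t => exp (-I * ω * t) / (-I * ω)
  have hv_deriv (t : ℝ) : HasDerivAt v (exp (-I * ω * t)) t := by
    refine ((ofRealCLM.hasDerivAt.const_mul (-I * ω : ℂ)).cexp.div_const _).congr_deriv ?_
    simp only [ofRealCLM_apply, ofReal_one, mul_one]
    field_simp
  have hv_norm (t : ℝ) : ‖v t‖ = 1 / |ω| := by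
    simp only [v, norm_div, norm_exp_neg_I_mul_ofReal_mul]
    simp
  have hv_cont : Continuous v := continuous_iff_continuousAt.2 fun t => (hv_deriv t).continuousAt
  have h_ibp := integral_mul_deriv_eq_deriv_mul_of_hasDerivAt (u := f) (u' := f') (v := v)
    (by rwa [uIcc_of_le hab]) hv_cont.continuousOn
    (by rwa [min_eq_left hab, max_eq_right hab]) (fun t _ => hv_deriv t)
    (hf'.intervalIntegrable_of_Icc hab)
    ((by fun_prop : Continuous fun t : ℝ => exp (-I * ω * t)).intervalIntegrable _ _)
  have h_ends : ∀ t ∈ Icc a b, ‖f t * v t‖ ≤ A / |ω| := fun t ht => by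
    rw [norm_mul, hv_norm, mul_one_div]
    gcongr
    exact hA t ht
  have h_rest : ‖∫ t in a..b, f' t * v t‖ ≤ B / |ω| * (b - a) := by
    have h_le : ∀ t ∈ Ι a b, ‖f' t * v t‖ ≤ B / |ω| := fun t ht => by
      rw [norm_mul, hv_norm, mul_one_div]
      gcongr
      exact hB t (Ioc_subset_Icc_self (uIoc_of_le hab ▸ ht))
    simpa [abs_of_nonneg (sub_nonneg.2 hab)] using norm_integral_le_of_norm_le_const h_le
  rw [h_ibp]
  calc _ ≤ ‖f b * v b‖ + ‖f a * v a‖ + ‖∫ t in a..b, f' t * v t‖ :=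
        norm_sub_le_of_le (norm_sub_le _ _) le_rfl
    _ ≤ A / |ω| + A / |ω| + B / |ω| * (b - a) :=
        add_le_add (add_le_add (h_ends b (right_mem_Icc.2 hab)) (h_ends a (left_mem_Icc.2 hab)))
          h_rest
    _ = (2 * A + B * (b - a)) / |ω| := by ring

theorem norm_integral_integral_mul_exp_add_le {h h₁ h₂ h₁₂ : ℝ → ℝ → ℂ}
    {a b ω M M₁ M₂ M₁₂ : ℝ} (hab : a ≤ b) (hω : ω ≠ 0)
    (hd1 : ∀ t₁ ∈ Icc a b, ∀ t₂ ∈ Icc a b, HasDerivAt (h · t₂) (h₁ t₁ t₂) t₁)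
    (hd2 : ∀ t₁ ∈ Icc a b, ∀ t₂ ∈ Icc a b, HasDerivAt (h t₁) (h₂ t₁ t₂) t₂)
    (hd12 : ∀ t₁ ∈ Icc a b, ∀ t₂ ∈ Icc a b, HasDerivAt (h₁ t₁) (h₁₂ t₁ t₂) t₂)
    (hcont : ContinuousOn (uncurry h) (Icc a b ×ˢ Icc a b))
    (hcont1 : ContinuousOn (uncurry h₁) (Icc a b ×ˢ Icc a b))
    (hcont2 : ContinuousOn (uncurry h₂) (Icc a b ×ˢ Icc a b))
    (hcont12 : ContinuousOn (uncurry h₁₂) (Icc a b ×ˢ Icc a b))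
    (hb : ∀ t₁ ∈ Icc a b, ∀ t₂ ∈ Icc a b, ‖h t₁ t₂‖ ≤ M)
    (hb1 : ∀ t₁ ∈ Icc a b, ∀ t₂ ∈ Icc a b, ‖h₁ t₁ t₂‖ ≤ M₁)
    (hb2 : ∀ t₁ ∈ Icc a b, ∀ t₂ ∈ Icc a b, ‖h₂ t₁ t₂‖ ≤ M₂)
    (hb12 : ∀ t₁ ∈ Icc a b, ∀ t₂ ∈ Icc a b, ‖h₁₂ t₁ t₂‖ ≤ M₁₂) :
    ‖∫ t₁ in a..b, ∫ t₂ in a..b, h t₁ t₂ * exp (-I * ω * ((t₁ : ℂ) + t₂))‖ ≤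
      (2 * (2 * M + M₂ * (b - a)) + (2 * M₁ + M₁₂ * (b - a)) * (b - a)) / ω ^ 2 := by
  set g : ℝ → ℂ := fun t₁ => ∫ t₂ in a..b, h t₁ t₂ * exp (-I * ω * t₂)
  set g' : ℝ → ℂ := fun t₁ => ∫ t₂ in a..b, h₁ t₁ t₂ * exp (-I * ω * t₂)
  have he : Continuous fun p : ℝ × ℝ => exp (-I * ω * p.2) := by fun_prop
  have hF : ContinuousOn (uncurry fun t₁ t₂ => h t₁ t₂ * exp (-I * ω * t₂))
      (Icc a b ×ˢ Icc a b) := hcont.mul he.continuousOn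
  have hF₁ : ContinuousOn (uncurry fun t₁ t₂ => h₁ t₁ t₂ * exp (-I * ω * t₂))
      (Icc a b ×ˢ Icc a b) := hcont1.mul he.continuousOn
  have hg_le (t₁ : ℝ) (ht₁ : t₁ ∈ Icc a b) : ‖g t₁‖ ≤ (2 * M + M₂ * (b - a)) / |ω| :=
    norm_integral_mul_exp_le hab hω (hcont.uncurry_left t₁ ht₁) (hcont2.uncurry_left t₁ ht₁)
      (fun t ht => hd2 t₁ ht₁ t (Ioo_subset_Icc_self ht)) (hb t₁ ht₁) (hb2 t₁ ht₁)
  have hg'_le (t₁ : ℝ) (ht₁ : t₁ ∈ Icc a b) : ‖g' t₁‖ ≤ (2 * M₁ + M₁₂ * (b - a)) / |ω| :=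
    norm_integral_mul_exp_le hab hω (hcont1.uncurry_left t₁ ht₁) (hcont12.uncurry_left t₁ ht₁)
      (fun t ht => hd12 t₁ ht₁ t (Ioo_subset_Icc_self ht)) (hb1 t₁ ht₁) (hb12 t₁ ht₁)
  have hg_deriv (t₁ : ℝ) (ht₁ : t₁ ∈ Ioo a b) : HasDerivAt g (g' t₁) t₁ :=
    hasDerivAt_intervalIntegral_of_continuousOn_prod hab hF hF₁
      (fun x hx t ht => (hd1 x hx t ht).mul_const _) ht₁
  have h_inner : (fun t₁ : ℝ => ∫ t₂ in a..b, h t₁ t₂ * exp (-I * ω * ((t₁ : ℂ) + t₂))) =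
      fun t₁ => g t₁ * exp (-I * ω * t₁) := by
    ext t₁
    rw [← intervalIntegral.integral_mul_const]
    congr 1 with t₂
    rw [mul_add, exp_add]
    ring
  rw [h_inner]
  calc _ ≤ (2 * ((2 * M + M₂ * (b - a)) / |ω|) + (2 * M₁ + M₁₂ * (b - a)) / |ω| * (b - a)) / |ω| :=
        norm_integral_mul_exp_le hab hω
          (continuousOn_intervalIntegral_of_continuousOn_prod hab hab hF)
          (continuousOn_intervalIntegral_of_continuousOn_prod hab hab hF₁) hg_deriv hg_le hg'_le
    _ = _ := by
        rw [← sq_abs ω]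
        field_simp

/-- The oscillatory integral estimate from Lemma 3.7: if h is C² on [0,τ]² with
|h| ≤ 1, |∂h/∂tᵢ| ≤ 5β and |∂²h/∂t₁∂t₂| ≤ 25β², then with β' = max(β, 1/τ) and
any nonzero integer m,
|(1/τ²)∫₀^τ∫₀^τ h(t₁,t₂)e^{−im(t₁+t₂)}dt₁dt₂| ≤ 49β'²/m². -/
theorem stmt7 (τ β : ℝ) (hτ : 0 < τ) (hβ : 0 < β)
    (h h₁ h₂ h₁₂ : ℝ → ℝ → ℂ)
    (hd1 : ∀ t₁ ∈ Icc 0 τ, ∀ t₂ ∈ Icc 0 τ, HasDerivAt (fun s => h s t₂) (h₁ t₁ t₂) t₁)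
    (hd2 : ∀ t₁ ∈ Icc 0 τ, ∀ t₂ ∈ Icc 0 τ, HasDerivAt (fun s => h t₁ s) (h₂ t₁ t₂) t₂)
    (hd12 : ∀ t₁ ∈ Icc 0 τ, ∀ t₂ ∈ Icc 0 τ,
      HasDerivAt (fun s => h₁ t₁ s) (h₁₂ t₁ t₂) t₂)
    (hcont : ContinuousOn (fun p : ℝ × ℝ => h p.1 p.2) (Icc 0 τ ×ˢ Icc 0 τ))
    (hcont1 : ContinuousOn (fun p : ℝ × ℝ => h₁ p.1 p.2) (Icc 0 τ ×ˢ Icc 0 τ))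
    (hcont2 : ContinuousOn (fun p : ℝ × ℝ => h₂ p.1 p.2) (Icc 0 τ ×ˢ Icc 0 τ))
    (hcont12 : ContinuousOn (fun p : ℝ × ℝ => h₁₂ p.1 p.2) (Icc 0 τ ×ˢ Icc 0 τ))
    (hb : ∀ t₁ ∈ Icc 0 τ, ∀ t₂ ∈ Icc 0 τ, ‖h t₁ t₂‖ ≤ 1)
    (hb1 : ∀ t₁ ∈ Icc 0 τ, ∀ t₂ ∈ Icc 0 τ, ‖h₁ t₁ t₂‖ ≤ 5 * β)
    (hb2 : ∀ t₁ ∈ Icc 0 τ, ∀ t₂ ∈ Icc 0 τ, ‖h₂ t₁ t₂‖ ≤ 5 * β)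
    (hb12 : ∀ t₁ ∈ Icc 0 τ, ∀ t₂ ∈ Icc 0 τ, ‖h₁₂ t₁ t₂‖ ≤ 25 * β ^ 2)
    (m : ℤ) (hm : m ≠ 0) (β' : ℝ) (hβ' : β' = max β (1 / τ)) :
    ‖(1 / τ ^ 2 : ℂ) * ∫ t₁ in (0 : ℝ)..τ, ∫ t₂ in (0 : ℝ)..τ,
        h t₁ t₂ * Complex.exp (-Complex.I * m * (t₁ + t₂))‖
      ≤ 49 * β' ^ 2 / (m : ℝ) ^ 2 := by
  have key := norm_integral_integral_mul_exp_add_le (ω := m) hτ.le (Int.cast_ne_zero.2 hm)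
    hd1 hd2 hd12 hcont hcont1 hcont2 hcont12 hb hb1 hb2 hb12
  simp only [ofReal_intCast, sub_zero] at key
  have h_rate : 2 / τ + 5 * β ≤ 7 * β' := by
    have hβ_le : β ≤ β' := hβ' ▸ le_max_left _ _
    have hτ_le : 1 / τ ≤ β' := hβ' ▸ le_max_right _ _
    linarith [show 2 / τ = 2 * (1 / τ) by ring]
  have h_norm : ‖(1 / τ ^ 2 : ℂ)‖ = 1 / τ ^ 2 := by
    rw [norm_div, norm_one, norm_pow, norm_real, Real.norm_of_nonneg hτ.le]
  rw [norm_mul, h_norm]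
  calc _ ≤ 1 / τ ^ 2 *
          ((2 * (2 * 1 + 5 * β * τ) + (2 * (5 * β) + 25 * β ^ 2 * τ) * τ) / (m : ℝ) ^ 2) := by
        gcongr
    _ = (2 / τ + 5 * β) ^ 2 / (m : ℝ) ^ 2 := by
        field_simp
        ring
    _ ≤ (7 * β') ^ 2 / (m : ℝ) ^ 2 := by gcongr
    _ = 49 * β' ^ 2 / (m : ℝ) ^ 2 := by ring
end
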